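/- arXiv:math/0601563 — 2 statements merged into one kernel-verified Lean document; each statement's English description precedes it below -/
import Mathlib

section
/- One has P^W = {λ ∈ P : ⟨h_i,λ⟩ = 0 for all i ∈ I}, where P^W = {λ ∈ P : wλ = λ for all w ∈ W}, and the map η : Q → P defined by η(β) = β − Σ_{i∈I} ⟨h_i,β⟩Λ_i is an isomorphism of abelian groups from Q onto P^W. -/
open scoped BigOperators

namespace AffineKM

/-- An indecomposable generalized Cartan matrix of affine type, together with a
choice of positive integers `(a_i)` and `(a_i^∨)` annihilating it on the right
and on the left. -/
structure AffineData (I : Type) [Fintype I] [DecidableEq I] where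
  a : I → I → ℤ
  apos : I → ℤ
  avee : I → ℤ
  diag : ∀ i, a i i = 2
  offdiag_nonpos : ∀ i j, i ≠ j → a i j ≤ 0
  zero_iff : ∀ i j, a i j = 0 ↔ a j i = 0
  connected : ∀ s : Set I, s.Nonempty → sᶜ.Nonempty → ∃ i ∈ s, ∃ j ∈ sᶜ, a i j ≠ 0
  apos_pos : ∀ i, 0 < apos i
  avee_pos : ∀ i, 0 < avee i
  row_zero : ∀ i, (∑ j, a i j * apos j) = 0
  col_zero : ∀ j, (∑ i, avee i * a i j) = 0

variable {I : Type} [Fintype I] [DecidableEq I]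

/-- The weight lattice `P`, free on the `Λ_i` and the `α_i`: the first component
records the coordinates with respect to the basis `{Λ_i}`, the second component the
coordinates with respect to the basis `{α_i}`. -/
abbrev P (I : Type) := (I → ℤ) × (I → ℤ)

/-- The fundamental weight `Λ_i`. -/
def Lambda (i : I) : P I := (Pi.single i 1, 0)

/-- The simple root `α_i`. -/
def alphaRt (i : I) : P I := (0, Pi.single i 1)

/-- A weight lies in `Q = ⊕ ℤα_i` iff its `Λ`-coordinates vanish. -/
def inQ (lam : P I) : Prop := lam.1 = 0

namespace AffineData

variable (D : AffineData I)

/-- The pairing `⟨h_i, λ⟩` with the simple coroot `h_i`. -/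
def coroot (i : I) (lam : P I) : ℤ := lam.1 i + ∑ j, D.a i j * lam.2 j

lemma coroot_add (i : I) (x y : P I) :
    D.coroot i (x + y) = D.coroot i x + D.coroot i y := by
  simp only [coroot, Prod.fst_add, Prod.snd_add, Pi.add_apply, mul_add,
    Finset.sum_add_distrib]
  ring

lemma coroot_zsmul (i : I) (z : ℤ) (x : P I) :
    D.coroot i (z • x) = z * D.coroot i x := by
  simp only [coroot, Prod.smul_fst, Prod.smul_snd, Pi.smul_apply, smul_eq_mul,
    mul_add, Finset.mul_sum]
  congr 1
  apply Finset.sum_congr rfl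
  intro j _
  ring

lemma coroot_alpha_self (i : I) : D.coroot i (alphaRt i) = 2 := by
  simp only [coroot, alphaRt, Pi.zero_apply, zero_add]
  rw [Finset.sum_eq_single i]
  · simp [D.diag]
  · intro j _ hj
    simp [Pi.single_apply, Ne.symm hj]
  · intro h; exact absurd (Finset.mem_univ i) h

lemma refl_aux (i : I) (lam : P I) :
    (lam - D.coroot i lam • alphaRt i)
      - D.coroot i (lam - D.coroot i lam • alphaRt i) • alphaRt i = lam := by
  have h1 : D.coroot i (lam - D.coroot i lam • alphaRt i)
      = - D.coroot i lam := by
    have h0 := D.coroot_add i (lam - D.coroot i lam • alphaRt i)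
      (D.coroot i lam • alphaRt i)
    simp only [sub_add_cancel] at h0
    have h2 : D.coroot i (D.coroot i lam • alphaRt i) = 2 * D.coroot i lam := by
      rw [D.coroot_zsmul, D.coroot_alpha_self]; ring
    omega
  rw [h1, neg_zsmul]
  abel

/-- The simple reflection `s_i : λ ↦ λ - ⟨h_i,λ⟩ α_i`, as an automorphism of `P`. -/
def refl (i : I) : AddAut (P I) where
  toFun lam := lam - D.coroot i lam • alphaRt i
  invFun lam := lam - D.coroot i lam • alphaRt i
  left_inv lam := D.refl_aux i lam
  right_inv lam := D.refl_aux i lam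
  map_add' x y := by
    rw [D.coroot_add, add_zsmul]
    abel

/-- The affine Weyl group, as a subgroup of the automorphism group of `P`. -/
def weyl : AddSubgroup (AddAut (P I)) := AddSubgroup.closure (Set.range D.refl)

/-- The simple reflection `s_i` as an element of the Weyl group. -/
def sgen (i : I) : D.weyl := ⟨D.refl i, AddSubgroup.subset_closure ⟨i, rfl⟩⟩

/-- The length of an element of the Weyl group: the minimal length of an
expression as a product of simple reflections. -/
noncomputable def len (w : D.weyl) : ℕ :=
  sInf {n | ∃ l : List I, l.length = n ∧ (w : AddAut (P I)) = (l.map D.refl).sum}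

/-- The null root `δ = Σ a_i α_i`. -/
def delta : P I := (0, D.apos)

/-- The pairing `⟨c, λ⟩` with the canonical central element `c = Σ a_i^∨ h_i`. -/
def cpair (lam : P I) : ℤ := ∑ i, D.avee i * D.coroot i lam

/-- The dual Coxeter number `κ* = ⟨c, ρ⟩ = Σ a_i^∨`. -/
def kstar : ℤ := ∑ i, D.avee i

/-- λ ∈ P is regular if `⟨c,λ⟩ ≠ 0` and `⟨h_i, wλ⟩ ≠ 0` for all `w ∈ W`, `i ∈ I`. -/
def IsRegularWt (lam : P I) : Prop :=
  D.cpair lam ≠ 0 ∧ ∀ w ∈ D.weyl, ∀ i : I, D.coroot i (w lam) ≠ 0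

/-- The `W`-orbit of a weight. -/
def orb (lam : P I) : Set (P I) := {mu | ∃ w ∈ D.weyl, w lam = mu}

end AffineData

/-- The group algebra `ℤ[P]`. -/
abbrev ZP (I : Type) [Fintype I] [DecidableEq I] := AddMonoidAlgebra ℤ (P I)

/-- The basis element `e^λ` of `ℤ[P]`. -/
noncomputable def expw (lam : P I) : ZP I := AddMonoidAlgebra.single lam 1

/-- The action of an automorphism `w` of `P` on the group algebra `ℤ[P]`,
`e^λ ↦ e^{wλ}`, as a ring homomorphism. -/
noncomputable def wact (w : AddAut (P I)) : ZP I →+* ZP I :=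
  AddMonoidAlgebra.mapDomainRingHom ℤ w.toAddMonoidHom

lemma wact_single (w : AddAut (P I)) (lam : P I) (c : ℤ) :
    wact w (AddMonoidAlgebra.single lam c) = AddMonoidAlgebra.single (w lam) c := by
  simp [wact, AddMonoidAlgebra.mapDomainRingHom, Finsupp.mapDomain_single]


namespace AffineData

variable (D : AffineData I)

lemma coroot_delta (i : I) : D.coroot i D.delta = 0 := by
  simp only [coroot, delta, Pi.zero_apply, zero_add]
  exact D.row_zero i

lemma refl_apply (i : I) (lam : P I) :
    D.refl i lam = lam - D.coroot i lam • alphaRt i := rfl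

lemma refl_delta (i : I) : D.refl i D.delta = D.delta := by
  rw [refl_apply, D.coroot_delta, zero_zsmul, sub_zero]

lemma weyl_fix_delta {w : AddAut (P I)} (hw : w ∈ D.weyl) : w D.delta = D.delta := by
  induction hw using AddSubgroup.closure_induction with
  | mem x hx => obtain ⟨i, rfl⟩ := hx; exact D.refl_delta i
  | zero => rfl
  | add x y hx hy ihx ihy =>
      show x (y D.delta) = D.delta
      rw [ihy, ihx]
  | neg x hx ih =>
      have : (-x) (x D.delta) = (-x) D.delta := by rw [ih]
      simpa using this.symm

lemma weyl_fix_zsmul_delta {w : AddAut (P I)} (hw : w ∈ D.weyl) (n : ℤ) :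
    w (n • D.delta) = n • D.delta := by
  rw [map_zsmul, D.weyl_fix_delta hw]

/-- The multiplicative set generated by the elements `e^{nδ} - 1`, `n ≥ 1`; `R ⊗_{ℤ[q,q⁻¹]} ℤ[P]`
is realized as the localization of `ℤ[P]` at this set. -/
noncomputable def denomSet : Submonoid (ZP I) :=
  Submonoid.closure {x | ∃ n : ℤ, 0 < n ∧ x = expw (n • D.delta) - 1}

/-- `R ⊗_{ℤ[q,q⁻¹]} ℤ[P]`, realized as the localization of `ℤ[P]` at the
multiplicative set generated by the `e^{nδ} - 1`, `n ≥ 1` (note that `q = e^δ` is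
already invertible in this ring). -/
noncomputable abbrev locZP := Localization D.denomSet

lemma wact_denom {w : AddAut (P I)} (hw : w ∈ D.weyl) :
    D.denomSet ≤ Submonoid.comap (wact w) D.denomSet := by
  rw [denomSet, Submonoid.closure_le]
  intro x hx
  obtain ⟨n, hn, rfl⟩ := hx
  simp only [Submonoid.coe_comap, Set.mem_preimage, SetLike.mem_coe]
  have : wact w (expw (n • D.delta) - 1) = expw (n • D.delta) - 1 := by
    rw [map_sub, map_one, expw, wact_single, D.weyl_fix_zsmul_delta hw]
  rw [this]
  exact Submonoid.subset_closure ⟨n, hn, rfl⟩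

/-- The action of `w ∈ W` on `R ⊗_{ℤ[q,q⁻¹]} ℤ[P]`. -/
noncomputable def wactM (w : D.weyl) : D.locZP →+* D.locZP :=
  IsLocalization.map (Localization D.denomSet) (wact (w : AddAut (P I)))
    (D.wact_denom w.2)

end AffineData

/-- The projection `P = L ⊕ Q → Q`, as an additive homomorphism. -/
def projQ : P I →+ P I where
  toFun lam := (0, lam.2)
  map_zero' := rfl
  map_add' x y := by simp [Prod.ext_iff]

/-- The ring homomorphism `j_e : ℤ[P] → ℤ[Q] ⊆ ℤ[P]`, `e^{λ+α} ↦ e^α` for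
`λ ∈ L`, `α ∈ Q`. -/
noncomputable def jeRing : ZP I →+* ZP I :=
  AddMonoidAlgebra.mapDomainRingHom ℤ (projQ (I := I))

/-- The ℤ-linear map `j_w : ℤ[P] → ℤ[Q] ⊆ ℤ[P]`, `e^{λ+α} ↦ e^{w(λ+α)-λ}` for
`λ ∈ L`, `α ∈ Q`. -/
noncomputable def jmap (w : AddAut (P I)) (u : ZP I) : ZP I :=
  AddMonoidAlgebra.ofCoeff (Finsupp.mapDomain (fun mu => w mu - (mu.1, 0)) u.coeff)

namespace AffineData

variable (D : AffineData I)

lemma je_denom : D.denomSet ≤ Submonoid.comap (jeRing (I := I)) D.denomSet := by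
  rw [denomSet, Submonoid.closure_le]
  intro x hx
  obtain ⟨n, hn, rfl⟩ := hx
  simp only [Submonoid.coe_comap, Set.mem_preimage, SetLike.mem_coe]
  have h1 : jeRing (expw (n • D.delta) - 1) = expw (n • D.delta) - 1 := by
    rw [map_sub, map_one, expw, jeRing]
    have : AddMonoidAlgebra.mapDomainRingHom ℤ (projQ (I := I))
        (AddMonoidAlgebra.single (n • D.delta) 1)
        = AddMonoidAlgebra.single (projQ (n • D.delta)) (1 : ℤ) := by
      simp [AddMonoidAlgebra.mapDomainRingHom, Finsupp.mapDomain_single]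
    rw [this]
    have h2 : projQ (n • D.delta) = n • D.delta := by
      show ((0 : I → ℤ), (n • D.delta).2) = n • D.delta
      simp [delta, Prod.ext_iff]
    rw [h2]
  rw [h1]
  exact Submonoid.subset_closure ⟨n, hn, rfl⟩

/-- The `R`-linear extension of `j_e` to `R ⊗_{ℤ[q,q⁻¹]} ℤ[P]`, with values in
`R ⊗_{ℤ[q,q⁻¹]} ℤ[Q] ⊆ R ⊗_{ℤ[q,q⁻¹]} ℤ[P]`. -/
noncomputable def jeLoc : D.locZP →+* D.locZP :=
  IsLocalization.map (Localization D.denomSet) (jeRing (I := I)) D.je_denom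

end AffineData


/-- The map `η : Q → P`, `η(β) = β - Σ_i ⟨h_i,β⟩ Λ_i`, where `Q` is identified with
`I → ℤ` via the basis `{α_i}`. -/
def etaMap (D : AffineData I) (d : I → ℤ) : P I :=
  ((fun i => -(∑ j, D.a i j * d j)), d)

/-- `P^W = {λ : ⟨h_i,λ⟩ = 0 ∀i}`, and `η : Q → P`, `η(β) = β - Σ_i ⟨h_i,β⟩Λ_i`, is an
isomorphism of abelian groups from `Q` onto `P^W`. -/
theorem eta_iso_onto_invariants (D : AffineData I) :
    (∀ lam : P I, (∀ w ∈ D.weyl, w lam = lam) ↔ (∀ i : I, D.coroot i lam = 0)) ∧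
    (∀ d d' : I → ℤ, etaMap D (d + d') = etaMap D d + etaMap D d') ∧
    Function.Injective (etaMap D) ∧
    (∀ d : I → ℤ, ∀ w ∈ D.weyl, w (etaMap D d) = etaMap D d) ∧
    (∀ lam : P I, (∀ w ∈ D.weyl, w lam = lam) → ∃ d : I → ℤ, etaMap D d = lam) := by
  have key : ∀ lam : P I, (∀ w ∈ D.weyl, w lam = lam) ↔ (∀ i : I, D.coroot i lam = 0) := by
    intro lam
    constructor
    · intro h i
      have hmem : (D.refl i : AddAut (P I)) ∈ D.weyl :=
        AddSubgroup.subset_closure ⟨i, rfl⟩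
      have := h _ hmem
      rw [D.refl_apply, sub_eq_self] at this
      have h2 : (D.coroot i lam • alphaRt i).2 i = 0 := by rw [this]; rfl
      simpa [alphaRt] using h2
    · intro h w hw
      induction hw using AddSubgroup.closure_induction with
      | mem x hx =>
          obtain ⟨i, rfl⟩ := hx
          rw [D.refl_apply, h i, zero_zsmul, sub_zero]
      | zero => rfl
      | add x y hx hy ihx ihy => show x (y lam) = lam; rw [ihy, ihx]
      | neg x hx ih =>
          have : (-x) (x lam) = (-x) lam := by rw [ih]
          simpa using this.symm
  refine ⟨key, ?_, ?_, ?_, ?_⟩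
  · intro d d'
    simp only [etaMap, Prod.mk_add_mk, Prod.ext_iff]
    constructor
    · funext i
      simp [Pi.add_apply, mul_add, Finset.sum_add_distrib]
      ring
    · trivial
  · intro d d' h
    exact congrArg Prod.snd h
  · intro d w hw
    refine (key _).2 (fun i => ?_) w hw
    simp [AffineData.coroot, etaMap]
  · intro lam h
    refine ⟨lam.2, ?_⟩
    have h2 := (key lam).1 h
    simp only [etaMap, Prod.ext_iff]
    refine ⟨funext fun i => ?_, trivial⟩
    have := h2 i
    simp only [AffineData.coroot] at this
    linarith

end AffineKM
end

section
/- Let J be a nonempty subset of I such that a_{jk} = 0 for all distinct j,k ∈ J (so the reflections s_j, j ∈ J, pairwise commute), and set G = ∏_{j∈J}(1 − e^{−Λ_j}) ∈ ℤ[P]. Then: 𝒟_j(G) = ∏_{k∈J∖{j}}(1 − e^{−Λ_k}) for every j ∈ J; 𝒟_i(G) = G for every i ∈ I∖J; and j_e(G) = 0. (These are the defining relations of the affine Grothendieck polynomial of the element ∏_{j∈J} s_j of W.) -/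
open scoped BigOperators

namespace AffineKM

variable {I : Type} [Fintype I] [DecidableEq I]

lemma expw_mul (a b : P I) : expw a * expw b = expw (a + b) := by
  simp [expw, AddMonoidAlgebra.single_mul_single]

lemma coroot_Lambda (D : AffineData I) (i k : I) :
    D.coroot i (Lambda k) = if k = i then 1 else 0 := by
  simp [AffineData.coroot, Lambda, Pi.single_apply, eq_comm]

lemma refl_neg_Lambda_ne (D : AffineData I) {i k : I} (h : k ≠ i) :
    D.refl i (-(Lambda k)) = -(Lambda k) := by
  have : D.coroot i (-(Lambda k)) = 0 := by
    have := D.coroot_zsmul i (-1) (Lambda k)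
    simp only [neg_smul, one_smul] at this
    rw [this, coroot_Lambda, if_neg h, mul_zero]
  rw [AffineData.refl_apply, this, zero_zsmul, sub_zero]

lemma refl_neg_Lambda_self (D : AffineData I) (j : I) :
    D.refl j (-(Lambda j)) = alphaRt j - Lambda j := by
  have : D.coroot j (-(Lambda j)) = -1 := by
    have := D.coroot_zsmul j (-1) (Lambda j)
    simp only [neg_smul, one_smul] at this
    rw [this, coroot_Lambda, if_pos rfl, mul_one]
  rw [AffineData.refl_apply, this]
  simp only [neg_smul, one_smul, sub_neg_eq_add]
  abel

/-- Section 9, first examples: if the `s_j`, `j ∈ J`, pairwise commute (i.e. `a_{jk} = 0`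
for distinct `j,k ∈ J`) then `G = ∏_{j∈J}(1 - e^{-Λ_j})` satisfies the defining relations
of the affine Grothendieck polynomial of `∏_{j∈J} s_j`:
`𝒟_j(G) = ∏_{k∈J∖{j}}(1 - e^{-Λ_k})` for `j ∈ J`, `𝒟_i(G) = G` for `i ∉ J`, and
`j_e(G) = 0`.  The Demazure operator `𝒟_i` is encoded through its defining relation
`(1 - e^{-α_i})·𝒟_i(u) = u - e^{-α_i}·(s_i·u)`, which characterizes it uniquely since
`ℤ[P]` is an integral domain. -/
theorem grothendieck_of_commuting_product (D : AffineData I) (J : Finset I)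
    (hJ : J.Nonempty)
    (hcomm : ∀ j ∈ J, ∀ k ∈ J, j ≠ k → D.a j k = 0) :
    (∀ j ∈ J,
      (1 - expw (-(alphaRt j))) * (∏ k ∈ J.erase j, (1 - expw (-(Lambda k))))
        = (∏ k ∈ J, (1 - expw (-(Lambda k))))
          - expw (-(alphaRt j))
              * wact (D.refl j) (∏ k ∈ J, (1 - expw (-(Lambda k))))) ∧
    (∀ i : I, i ∉ J →
      (1 - expw (-(alphaRt i))) * (∏ k ∈ J, (1 - expw (-(Lambda k))))
        = (∏ k ∈ J, (1 - expw (-(Lambda k))))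
          - expw (-(alphaRt i))
              * wact (D.refl i) (∏ k ∈ J, (1 - expw (-(Lambda k))))) ∧
    jeRing (∏ k ∈ J, (1 - expw (-(Lambda k)))) = 0 := by
  refine ⟨?_, ?_, ?_⟩
  · intro j hj
    set Pe : ZP I := ∏ k ∈ J.erase j, (1 - expw (-(Lambda k))) with hPe
    have hG : (∏ k ∈ J, (1 - expw (-(Lambda k))))
        = (1 - expw (-(Lambda j))) * Pe := (Finset.mul_prod_erase J _ hj).symm
    have hwPe : wact (D.refl j) Pe = Pe := by
      rw [hPe, map_prod]
      refine Finset.prod_congr rfl fun k hk => ?_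
      have hkj : k ≠ j := Finset.ne_of_mem_erase hk
      rw [map_sub, map_one, expw, wact_single, refl_neg_Lambda_ne D hkj, ← expw]
    have hwG : wact (D.refl j) (∏ k ∈ J, (1 - expw (-(Lambda k))))
        = (1 - expw (alphaRt j - Lambda j)) * Pe := by
      rw [hG, map_mul, hwPe, map_sub, map_one, expw, wact_single,
        refl_neg_Lambda_self D j, ← expw]
    rw [hwG, hG]
    have key : expw (-(alphaRt j)) * expw (alphaRt j - Lambda j)
        = expw (-(Lambda j)) := by
      rw [expw_mul]; congr 1; abel
    linear_combination (-Pe) * key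
  · intro i hi
    have hwG : wact (D.refl i) (∏ k ∈ J, (1 - expw (-(Lambda k))))
        = ∏ k ∈ J, (1 - expw (-(Lambda k))) := by
      rw [map_prod]
      refine Finset.prod_congr rfl fun k hk => ?_
      have hki : k ≠ i := fun h => hi (h ▸ hk)
      rw [map_sub, map_one, expw, wact_single, refl_neg_Lambda_ne D hki, ← expw]
    rw [hwG]; ring
  · obtain ⟨j, hj⟩ := hJ
    rw [map_prod]
    refine Finset.prod_eq_zero hj ?_
    rw [map_sub, map_one]
    have : jeRing (expw (-(Lambda j))) = 1 := by
      rw [expw, jeRing]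
      have h1 : AddMonoidAlgebra.mapDomainRingHom ℤ (projQ (I := I))
          (AddMonoidAlgebra.single (-(Lambda j)) 1)
          = AddMonoidAlgebra.single (projQ (-(Lambda j))) (1 : ℤ) := by
        simp [AddMonoidAlgebra.mapDomainRingHom, Finsupp.mapDomain_single]
      rw [h1]
      have h2 : projQ (-(Lambda j)) = (0 : P I) := by
        show ((0 : I → ℤ), (-(Lambda j)).2) = (0 : P I)
        simp [Lambda, Prod.ext_iff]
      rw [h2, AddMonoidAlgebra.one_def]
    rw [this, sub_self]

end AffineKM
end
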